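/- Let ξ_1,...,ξ_k be linearly independent linear functionals on F^N (identified with the row vectors of their coordinates) and x_1,...,x_k linearly independent vectors of F^N, with k ≥ 2. Let Ξ = X(ξ_1,...,ξ_k) and X = X(x_1,...,x_k) be the corresponding Plücker tensors of degree k. Then Ξ ∘ X = O, where O is the null tensor of degree 2k−2, if and only if ⟨x_1,...,x_k⟩ ⊆ ∩_{i=1}^k Ker(ξ_i), i.e. ξ_i(x_j) = 0 for all i,j ∈ {1,...,k}. -/

import Mathlib

open scoped BigOperators Matrix

/-- A tensor of degree `r` over `F` in dimension `N`. -/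
abbrev Tensor (F : Type*) (N r : ℕ) := (Fin r → Fin N) → F

namespace Tensor

variable {F : Type*} [Field F] {N : ℕ}

/-- The `p`-product of a tensor of degree `r` with a tensor of degree `s`. -/
def pProd {r s p : ℕ} (X : Tensor F N r) (Y : Tensor F N s)
    (hpr : p ≤ r) (hps : p ≤ s) : Tensor F N ((r - p) + (s - p)) :=
  fun idx => ∑ h : Fin p → Fin N,
    X (fun i => if hi : (i : ℕ) < r - p then idx ⟨i, by omega⟩
        else h ⟨(i : ℕ) - (r - p), by have := i.isLt; omega⟩) *
    Y (fun j => if hj : (j : ℕ) < p then h ⟨j, hj⟩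
        else idx ⟨(r - p) + ((j : ℕ) - p), by have := j.isLt; omega⟩)

/-- The tensor product of two tensors. -/
def tProd {r s : ℕ} (X : Tensor F N r) (Y : Tensor F N s) : Tensor F N (r + s) :=
  fun idx => X (fun i => idx ⟨i, by have := i.isLt; omega⟩) *
             Y (fun j => idx ⟨r + (j : ℕ), by have := j.isLt; omega⟩)

/-- The pseudo-tensor product `X ⊙ Y` of tensors of even degrees `2u` and `2v`. -/
def pseudoProd {u v : ℕ} (X : Tensor F N (2 * u)) (Y : Tensor F N (2 * v)) :
    Tensor F N (2 * (u + v)) :=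
  fun idx =>
    X (fun i => if _ : (i : ℕ) < u then idx ⟨i, by have := i.isLt; omega⟩
        else idx ⟨u + v + ((i : ℕ) - u), by have := i.isLt; omega⟩) *
    Y (fun j => if _ : (j : ℕ) < v then idx ⟨u + (j : ℕ), by have := j.isLt; omega⟩
        else idx ⟨2 * u + v + ((j : ℕ) - v), by have := j.isLt; omega⟩)

/-- A matrix regarded as a tensor of degree `2`. -/
def ofMat (M : Matrix (Fin N) (Fin N) F) : Tensor F N 2 := fun idx => M (idx 0) (idx 1)

/-- A vector regarded as a tensor of degree `1`. -/
def ofVec (v : Fin N → F) : Tensor F N 1 := fun idx => v (idx 0)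

/-- Pseudo-tensor powers `⊙^r A` of a matrix (tensor of degree 2): `⊙^1 A = A`,
`⊙^(r+1) A = (⊙^r A) ⊙ A`. -/
def pPow (A : Tensor F N 2) : (r : ℕ) → Tensor F N (2 * r)
  | 0 => fun _ => 1
  | r + 1 => pseudoProd (u := r) (v := 1) (pPow A r) A

/-- Recasting a tensor along an equality of degrees. -/
def cast {r r' : ℕ} (h : r = r') (X : Tensor F N r) : Tensor F N r' :=
  fun idx => X (fun i => idx (Fin.cast h i))

/-- Applying a map `g : F → F` to every entry of a tensor. -/
def map (g : F → F) {r : ℕ} (X : Tensor F N r) : Tensor F N r := fun idx => g (X idx)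

/-- The Plücker tensor of `k` vectors of `F^N`: the alternating tensor of degree `k`
whose entry at `(i_1, …, i_k)` is the determinant of the `k × k` matrix whose `(r,s)`
entry is the `i_r`-th coordinate of `x_s`. It represents `x_1 ∧ ⋯ ∧ x_k`. -/
def plucker {k : ℕ} (x : Fin k → Fin N → F) : Tensor F N k :=
  fun idx => Matrix.det (Matrix.of fun r s => x s (idx r))

/-- The `(σ, ε)`-sesquilinear form on `F^N` with Gram matrix `M`. -/
def sesq (σ : F → F) (M : Matrix (Fin N) (Fin N) F) (v w : Fin N → F) : F :=
  ∑ i, ∑ j, σ (v i) * M i j * w j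

end Tensor

/-!
Laplace expansion along the contracted index writes the entry of `Ξ ∘ X` at `(a, b)` as
`Σ_{s,t} ±Ξ_s(a) X_t(b) ξ_s(x_t)`, where `Ξ_s`, `X_t` are the Plücker tensors of the families with
`ξ_s`, resp. `x_t`, removed. In matrix form `Ξ ∘ X = A G Bᵀ` with `A`, `B` the matrices of these
`(k-1)`-minors and `G` the signed Gram matrix `(±ξ_s(x_t))`. Linear independence gives `A` and `B`
left inverses, so `Ξ ∘ X = 0` exactly when `G = 0`.
-/

open Matrix Finset

namespace Matrix

variable {R : Type*}

theorem eq_zero_of_mul_mul_eq_zero [Semiring R] {l m n o : Type*} [Fintype l] [Fintype m]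
    [Fintype n] [Fintype o] [DecidableEq m] [DecidableEq n] {A : Matrix l m R} {G : Matrix m n R}
    {B : Matrix n o R} {A' : Matrix m l R} {B' : Matrix o n R}
    (hA : A' * A = 1) (hB : B * B' = 1) (h : A * G * B = 0) : G = 0 := by
  calc G = A' * (A * G * B) * B' := by
        simp only [Matrix.mul_assoc, hB, ← Matrix.mul_assoc A', hA, Matrix.one_mul, Matrix.mul_one]
    _ = 0 := by rw [h, Matrix.mul_zero, Matrix.zero_mul]

theorem exists_mul_eq_one_of_linearIndependent_row [Field R] {m n : Type*} [Fintype m]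
    [DecidableEq m] [Fintype n] {A : Matrix m n R} (hA : LinearIndependent R A.row) :
    ∃ B : Matrix n m R, A * B = 1 := by
  refine mulVec_surjective_iff_exists_right_inverse.mp ?_
  have hrank : Module.finrank R (LinearMap.range A.mulVecLin) = Module.finrank R (m → R) := by
    simpa [Matrix.rank] using hA.rank_matrix
  exact LinearMap.range_eq_top.mp (Submodule.eq_top_of_finrank_eq hrank)

theorem det_mul_eq_sum_prod_mul_det [CommRing R] {n α : Type*} [Fintype n] [DecidableEq n]
    [Fintype α] (C : Matrix n α R) (G : Matrix α n R) :
    det (C * G) = ∑ a : n → α, (∏ r, C r (a r)) * det (G.submatrix a id) := by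
  have hrows : C * G = fun r => ∑ m, C r m • G m := by
    ext r c
    simp [Matrix.mul_apply]
  rw [hrows]
  change (detRowAlternating : (n → R) [⋀^n]→ₗ[R] R).toMultilinearMap
    (fun r => ∑ m, C r m • G m) = _
  rw [MultilinearMap.map_sum]
  simp only [MultilinearMap.map_smul_univ, smul_eq_mul]
  rfl

theorem det_one_submatrix_succAbove [CommRing R] {n : ℕ} (i j : Fin (n + 1)) :
    det ((1 : Matrix (Fin (n + 1)) (Fin (n + 1)) R).submatrix i.succAbove j.succAbove) =
      if i = j then 1 else 0 := by
  split_ifs with hij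
  · subst hij
    rw [submatrix_one _ Fin.succAbove_right_injective, det_one]
  · obtain ⟨r, hr⟩ := Fin.exists_succAbove_eq (Ne.symm hij)
    refine det_eq_zero_of_row_eq_zero r fun c => ?_
    simp [hr, Fin.succAbove_ne j c |>.symm]

end Matrix

namespace Tensor

variable {F : Type*} [Field F] {N : ℕ}

theorem pProd_one_apply {K L : ℕ} (X : Tensor F N (K + 1)) (Y : Tensor F N (L + 1))
    (hX : 1 ≤ K + 1) (hY : 1 ≤ L + 1) (idx : Fin (K + L) → Fin N) :
    pProd (p := 1) X Y hX hY idx =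
      ∑ h : Fin N, X (Fin.snoc (fun r : Fin K => idx (Fin.castAdd L r)) h) *
        Y (Fin.cons h fun r : Fin L => idx (Fin.natAdd K r)) := by
  refine Fintype.sum_equiv (Equiv.funUnique (Fin 1) (Fin N)) _ _ fun h => ?_
  congr 2 <;> funext i
  · refine Fin.lastCases ?_ (fun i' => ?_) i
    · rw [Fin.snoc_last, dif_neg (by simp)]
      exact congrArg h (Subsingleton.elim _ _)
    · rw [Fin.snoc_castSucc, dif_pos (by simp)]
      rfl
  · refine Fin.cases ?_ (fun i' => ?_) i
    · rw [Fin.cons_zero, dif_pos (by simp)]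
      exact congrArg h (Subsingleton.elim _ _)
    · rw [Fin.cons_succ, dif_neg (by simp)]
      exact congrArg idx (Fin.ext (by simp))

theorem pProd_one_eq_zero_iff {K L : ℕ} (X : Tensor F N (K + 1)) (Y : Tensor F N (L + 1))
    (hX : 1 ≤ K + 1) (hY : 1 ≤ L + 1) :
    pProd (p := 1) X Y hX hY = 0 ↔
      ∀ (a : Fin K → Fin N) (b : Fin L → Fin N), ∑ h, X (Fin.snoc a h) * Y (Fin.cons h b) = 0 := by
  constructor
  · intro hXY a b
    simpa [pProd_one_apply] using congrFun hXY (Fin.append a b)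
  · intro h
    funext idx
    exact (pProd_one_apply X Y hX hY idx).trans (h _ _)

def pluckerMinors {K : ℕ} (ξ : Fin (K + 1) → Fin N → F) :
    Matrix (Fin K → Fin N) (Fin (K + 1)) F :=
  of fun a s => plucker (fun c => ξ (s.succAbove c)) a

theorem plucker_snoc {K : ℕ} (ξ : Fin (K + 1) → Fin N → F) (a : Fin K → Fin N) (h : Fin N) :
    plucker ξ (Fin.snoc a h) =
      ∑ s : Fin (K + 1), (-1) ^ (K + (s : ℕ)) * ξ s h * pluckerMinors ξ a s := by
  rw [plucker, det_succ_row _ (Fin.last K)]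
  simp [pluckerMinors, plucker, Fin.succAbove_last, submatrix]

theorem plucker_cons {K : ℕ} (x : Fin (K + 1) → Fin N → F) (b : Fin K → Fin N) (h : Fin N) :
    plucker x (Fin.cons h b) =
      ∑ t : Fin (K + 1), (-1) ^ (t : ℕ) * x t h * pluckerMinors x b t := by
  rw [plucker, det_succ_row_zero]
  simp [pluckerMinors, plucker, submatrix]

theorem sum_plucker_snoc_mul_plucker_cons {K : ℕ} (ξ x : Fin (K + 1) → Fin N → F)
    (a b : Fin K → Fin N) :
    ∑ h, plucker ξ (Fin.snoc a h) * plucker x (Fin.cons h b) =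
      (pluckerMinors ξ *
          of (fun s t : Fin (K + 1) => (-1) ^ (K + (s : ℕ)) * (-1) ^ (t : ℕ) * ∑ m, ξ s m * x t m) *
          (pluckerMinors x)ᵀ) a b := by
  simp only [plucker_snoc, plucker_cons, mul_apply, of_apply, transpose_apply, mul_sum, sum_mul]
  rw [sum_comm]
  refine sum_congr rfl fun s _ => ?_
  rw [sum_comm]
  refine sum_congr rfl fun t _ => ?_
  refine sum_congr rfl fun m _ => ?_
  ring

theorem exists_mul_pluckerMinors_eq_one {K : ℕ} {ξ : Fin (K + 1) → Fin N → F}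
    (hξ : LinearIndependent F ξ) :
    ∃ Λ : Matrix (Fin (K + 1)) (Fin K → Fin N) F, Λ * pluckerMinors ξ = 1 := by
  -- Contracting with a right inverse `V` of the rows of `ξ` turns the minors of `ξ` into
  -- minors of the identity matrix (Cauchy–Binet).
  obtain ⟨V, hV⟩ := exists_mul_eq_one_of_linearIndependent_row (A := of ξ) hξ
  refine ⟨of fun i a => ∏ r, V (a r) (i.succAbove r), ext fun i s => ?_⟩
  have hdual : (Vᵀ.submatrix i.succAbove id * (of ξ)ᵀ.submatrix id s.succAbove) =
      ((1 : Matrix (Fin (K + 1)) (Fin (K + 1)) F).submatrix s.succAbove i.succAbove)ᵀ := by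
    rw [← hV]
    ext r c
    simp [mul_apply, mul_comm]
  have hdet := congrArg det hdual
  rw [det_mul_eq_sum_prod_mul_det, det_transpose, det_one_submatrix_succAbove] at hdet
  simpa [mul_apply, pluckerMinors, plucker, submatrix, one_apply, eq_comm] using hdet

end Tensor

/-- For linearly independent functionals `ξ_1, …, ξ_k` (as row vectors) and
linearly independent `x_1, …, x_k ∈ F^N` with Plücker tensors `Ξ` and `X`, one has
`Ξ ∘ X = O` iff `⟨x_1, …, x_k⟩ ⊆ ⋂ᵢ Ker ξᵢ`, i.e. `ξᵢ(xⱼ) = 0` for all `i, j`. -/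
theorem plucker_oneProd_plucker_eq_zero_iff
    {F : Type*} [Field F] {N k : ℕ} (hk : 2 ≤ k)
    (ξ x : Fin k → Fin N → F)
    (hξ : LinearIndependent F ξ) (hx : LinearIndependent F x) :
    Tensor.pProd (p := 1) (Tensor.plucker ξ) (Tensor.plucker x) (by omega) (by omega) = 0 ↔
      ∀ i j : Fin k, ∑ m, ξ i m * x j m = 0 := by
  obtain ⟨K, rfl⟩ : ∃ K, k = K + 1 := ⟨k - 1, by omega⟩
  obtain ⟨Λξ, hΛξ⟩ := Tensor.exists_mul_pluckerMinors_eq_one hξ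
  obtain ⟨Λx, hΛx⟩ := Tensor.exists_mul_pluckerMinors_eq_one hx
  simp only [Tensor.pProd_one_eq_zero_iff, Tensor.sum_plucker_snoc_mul_plucker_cons]
  constructor
  · intro h i j
    have hG := eq_zero_of_mul_mul_eq_zero hΛξ
      (by rw [← transpose_mul, hΛx, transpose_one]) (ext h)
    simpa using congrFun₂ hG i j
  · intro h a b
    simp [h, mul_apply]
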